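/- arXiv:1104.4951 — 4 statements merged into one kernel-verified Lean document; each statement's English description precedes it below -/
import Mathlib

section
/- For a manifold X (e.g. X = ℝ^n), the evaluation maps give a bijection between points of X and ℝ-algebra morphisms C^∞(X) → ℝ. Equivalently, every ℝ-algebra homomorphism φ : C^∞(X) → ℝ is evaluation at a unique point x ∈ X. -/
/-! A character `φ` of `C^∞(ℝⁿ)` can only be evaluation at `x = (φ x₁, …, φ xₙ)`. Given `c`, the
smooth function `(c - φ c)² + ∑ i, (xᵢ - φ xᵢ)²` lies in the kernel of `φ`, so it is not invertible.
Nowhere-vanishing smooth functions are invertible, hence it has a zero, which must be `x`, and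
there `c x = φ c`. -/

def smoothSubalgebra (n : ℕ) : Subalgebra ℝ ((Fin n → ℝ) → ℝ) where
  carrier := {c | ContDiff ℝ (⊤ : ℕ∞) c}
  add_mem' := fun hc hd => by
    show ContDiff ℝ (⊤ : ℕ∞) _
    exact ContDiff.add hc hd
  mul_mem' := fun hc hd => by
    show ContDiff ℝ (⊤ : ℕ∞) _
    exact ContDiff.mul hc hd
  algebraMap_mem' := fun r => by
    show ContDiff ℝ (⊤ : ℕ∞) (fun _ => r)
    exact contDiff_const
  one_mem' := by
    show ContDiff ℝ (⊤ : ℕ∞) (fun _ => (1:ℝ))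
    exact contDiff_const
  zero_mem' := by
    show ContDiff ℝ (⊤ : ℕ∞) (fun _ => (0:ℝ))
    exact contDiff_const

abbrev SmoothAlg (n : ℕ) : Type := ↥(smoothSubalgebra n)

theorem smooth_mem {n : ℕ} {g : (Fin n → ℝ) → ℝ} (h : g ∈ smoothSubalgebra n) :
    ContDiff ℝ (⊤ : ℕ∞) g := h

def compFn {n k : ℕ} (f : (Fin k → ℝ) → ℝ) (hf : ContDiff ℝ (⊤ : ℕ∞) f)
    (c : Fin k → SmoothAlg n) : SmoothAlg n :=
  ⟨fun x => f (fun i => (c i : (Fin n → ℝ) → ℝ) x),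
   hf.comp (contDiff_pi.mpr fun i => smooth_mem (c i).2)⟩

namespace Subalgebra

variable {X : Type*} {A : Subalgebra ℝ (X → ℝ)}

theorem isUnit_of_forall_ne_zero (hinv : ∀ f ∈ A, (∀ x, f x ≠ 0) → f⁻¹ ∈ A) {f : A}
    (hf : ∀ x, (f : X → ℝ) x ≠ 0) : IsUnit f :=
  isUnit_iff_exists_inv.mpr
    ⟨⟨_, hinv f f.2 hf⟩, Subtype.ext <| funext fun x => mul_inv_cancel₀ (hf x)⟩

theorem exists_eq_zero_of_algHom_apply_eq_zero (hinv : ∀ f ∈ A, (∀ x, f x ≠ 0) → f⁻¹ ∈ A)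
    (φ : A →ₐ[ℝ] ℝ) {f : A} (hf : φ f = 0) : ∃ x, (f : X → ℝ) x = 0 := by
  by_contra! h
  exact ((isUnit_of_forall_ne_zero hinv h).map φ).ne_zero hf

theorem exists_forall_algHom_apply_eq_apply (hinv : ∀ f ∈ A, (∀ x, f x ≠ 0) → f⁻¹ ∈ A)
    (φ : A →ₐ[ℝ] ℝ) {ι : Type*} [Fintype ι] (c : ι → A) :
    ∃ x, ∀ i, φ (c i) = (c i : X → ℝ) x := by
  let d : A := ∑ i, (c i - algebraMap ℝ A (φ (c i))) ^ 2
  obtain ⟨x, hx⟩ := exists_eq_zero_of_algHom_apply_eq_zero hinv φ (f := d) (by simp [d])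
  have hsum : ∑ i, ((c i : X → ℝ) x - φ (c i)) ^ 2 = 0 := by simpa [d] using hx
  rw [Finset.sum_eq_zero_iff_of_nonneg fun i _ => sq_nonneg _] at hsum
  exact ⟨x, fun i => (sub_eq_zero.mp (pow_eq_zero_iff two_ne_zero |>.mp
    (hsum i (Finset.mem_univ i)))).symm⟩

end Subalgebra

theorem inv_mem_smoothSubalgebra {n : ℕ} {f : (Fin n → ℝ) → ℝ} (hf : f ∈ smoothSubalgebra n)
    (hf₀ : ∀ x, f x ≠ 0) : f⁻¹ ∈ smoothSubalgebra n :=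
  (smooth_mem hf).inv hf₀

theorem apply_mem_smoothSubalgebra {n : ℕ} (i : Fin n) :
    (fun x : Fin n → ℝ => x i) ∈ smoothSubalgebra n :=
  show ContDiff ℝ (⊤ : ℕ∞) _ from contDiff_apply ℝ ℝ i

/-- For `X = ℝ^n`, evaluation gives a bijection between points of `X`
and `ℝ`-algebra morphisms `C^∞(X) → ℝ`: every `ℝ`-algebra homomorphism
`φ : C^∞(ℝ^n) → ℝ` is evaluation at a unique point `x`. -/
theorem algHom_eq_eval (n : ℕ) (φ : SmoothAlg n →ₐ[ℝ] ℝ) :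
    ∃! x : Fin n → ℝ, ∀ c : SmoothAlg n, φ c = (c : (Fin n → ℝ) → ℝ) x := by
  let coord : Fin n → SmoothAlg n := fun i => ⟨_, apply_mem_smoothSubalgebra i⟩
  refine ⟨fun i => φ (coord i), fun c => ?_, fun x hx => funext fun i => (hx (coord i)).symm⟩
  obtain ⟨y, hy⟩ := Subalgebra.exists_forall_algHom_apply_eq_apply
    (fun _ => inv_mem_smoothSubalgebra) φ (fun j : Option (Fin n) => j.elim c coord)
  obtain rfl : y = fun i => φ (coord i) := funext fun i => (hy (some i)).symm
  exact hy none
end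

section
/- Let X, Y be manifolds. Then pullback gives a bijection from smooth maps f : X → Y to morphisms of C^∞-rings φ : C^∞(Y) → C^∞(X): every C^∞-ring morphism φ is of the form φ = f* (i.e. φ(c) = c ∘ f) for a unique smooth f. -/
/-!
Both rings carry the pointwise operations, so a smooth `c` on `ℝ^k` is the operation `Φ_c`
applied to the coordinate functions `y₁, …, y_k`. A morphism `φ` commutes with `Φ_c`, hence
`φ c = c ∘ (φ y₁, …, φ y_k)`: `φ` is the pullback along the smooth map whose components are
the images of the coordinates. Evaluating on the coordinates also shows that map is unique.
-/

structure CInftyRingStruct (C : Type) where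
  op : ∀ {n : ℕ}, ((Fin n → ℝ) → ℝ) → (Fin n → C) → C
  op_comp : ∀ {n m : ℕ} (g : (Fin m → ℝ) → ℝ) (f : Fin m → (Fin n → ℝ) → ℝ),
    ContDiff ℝ (⊤ : ℕ∞) g → (∀ i, ContDiff ℝ (⊤ : ℕ∞) (f i)) →
    ∀ c : Fin n → C,
      op (fun x => g (fun i => f i x)) c = op g (fun i => op (f i) c)
  op_proj : ∀ {n : ℕ} (j : Fin n) (c : Fin n → C),
      op (fun x => x j) c = c j

/-- A morphism of `C^∞`-rings: a map commuting with all the smooth operations. -/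
def IsCMor {C D : Type} (S : CInftyRingStruct C) (T : CInftyRingStruct D)
    (φ : C → D) : Prop :=
  ∀ (n : ℕ) (f : (Fin n → ℝ) → ℝ), ContDiff ℝ (⊤ : ℕ∞) f →
    ∀ c : Fin n → C, φ (S.op f c) = T.op f (fun i => φ (c i))

/-- The commutative `ℝ`-algebra structure on `C` agrees with the one induced by the
`C^∞`-operations applied to addition, multiplication, scalar multiplication, `1` and `0`. -/
def CInftyCompatible {C : Type} [CommRing C] [Algebra ℝ C] (S : CInftyRingStruct C) : Prop :=
  (∀ c : Fin 2 → C, S.op (fun x => x 0 + x 1) c = c 0 + c 1) ∧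
  (∀ c : Fin 2 → C, S.op (fun x => x 0 * x 1) c = c 0 * c 1) ∧
  (∀ (r : ℝ) (c : Fin 1 → C), S.op (fun x => r * x 0) c = r • c 0) ∧
  (∀ c : Fin 0 → C, S.op (fun _ => (1 : ℝ)) c = 1) ∧
  (∀ c : Fin 0 → C, S.op (fun _ => (0 : ℝ)) c = 0)


/-- The set of smooth real-valued functions on `ℝ^m`. -/
abbrev SmoothFn (m : ℕ) : Type := {c : (Fin m → ℝ) → ℝ // ContDiff ℝ (⊤ : ℕ∞) c}

def CInftyRingStruct.IsPointwise {k : ℕ} (S : CInftyRingStruct (SmoothFn k)) : Prop :=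
  ∀ (j : ℕ) (f : (Fin j → ℝ) → ℝ) (_ : ContDiff ℝ (⊤ : ℕ∞) f)
    (c : Fin j → SmoothFn k) (y : Fin k → ℝ), (S.op f c).1 y = f (fun i => (c i).1 y)

namespace SmoothFn

def coord (k : ℕ) (j : Fin k) : SmoothFn k :=
  ⟨fun y => y j, contDiff_apply ℝ ℝ j⟩

def pullback {m k : ℕ} (f : (Fin m → ℝ) → (Fin k → ℝ)) (hf : ContDiff ℝ (⊤ : ℕ∞) f)
    (c : SmoothFn k) : SmoothFn m :=
  ⟨fun x => c.1 (f x), c.2.comp hf⟩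

def coordMap {m k : ℕ} (φ : SmoothFn k → SmoothFn m) (x : Fin m → ℝ) : Fin k → ℝ :=
  fun j => (φ (coord k j)).1 x

theorem contDiff_coordMap {m k : ℕ} (φ : SmoothFn k → SmoothFn m) :
    ContDiff ℝ (⊤ : ℕ∞) (coordMap φ) :=
  contDiff_pi.mpr fun j => (φ (coord k j)).2

variable {m k : ℕ} {S : CInftyRingStruct (SmoothFn k)} {T : CInftyRingStruct (SmoothFn m)}

theorem op_coord_eq_self (hS : S.IsPointwise) (c : SmoothFn k) : S.op c.1 (coord k) = c :=
  Subtype.ext <| funext fun y => hS _ _ c.2 _ y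

theorem isCMor_pullback (hS : S.IsPointwise) (hT : T.IsPointwise)
    (f : (Fin m → ℝ) → (Fin k → ℝ)) (hf : ContDiff ℝ (⊤ : ℕ∞) f) :
    IsCMor S T (pullback f hf) := by
  intro n g hg c
  apply Subtype.ext
  funext x
  simp only [pullback, hT _ _ hg, hS _ _ hg]

theorem apply_eq_comp_coordMap_of_isCMor (hS : S.IsPointwise) (hT : T.IsPointwise)
    {φ : SmoothFn k → SmoothFn m} (hφ : IsCMor S T φ) (c : SmoothFn k) :
    (φ c).1 = fun x => c.1 (coordMap φ x) := by
  have h := hφ k c.1 c.2 (coord k)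
  rw [op_coord_eq_self hS] at h
  rw [h]
  funext x
  exact hT _ _ c.2 _ x

theorem eq_coordMap_of_apply_eq_comp {φ : SmoothFn k → SmoothFn m}
    {f : (Fin m → ℝ) → (Fin k → ℝ)} (hf : ∀ c : SmoothFn k, (φ c).1 = fun x => c.1 (f x)) :
    f = coordMap φ :=
  funext fun x => funext fun j => (congrFun (hf (coord k j)) x).symm

end SmoothFn

open SmoothFn in
/-- For `X = ℝ^m`, `Y = ℝ^k`, pullback gives a bijection from smooth maps
`f : X → Y` to morphisms of `C^∞`-rings `φ : C^∞(Y) → C^∞(X)`: pullback along any smooth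
map is a `C^∞`-ring morphism, and every `C^∞`-ring morphism is `f^*` for a unique smooth `f`. -/
theorem CInfty_morphisms_are_pullbacks (m k : ℕ)
    (S : CInftyRingStruct (SmoothFn k))
    (hS : ∀ (j : ℕ) (f : (Fin j → ℝ) → ℝ) (_ : ContDiff ℝ (⊤ : ℕ∞) f)
      (c : Fin j → SmoothFn k) (y : Fin k → ℝ), (S.op f c).1 y = f (fun i => (c i).1 y))
    (T : CInftyRingStruct (SmoothFn m))
    (hT : ∀ (j : ℕ) (f : (Fin j → ℝ) → ℝ) (_ : ContDiff ℝ (⊤ : ℕ∞) f)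
      (c : Fin j → SmoothFn m) (x : Fin m → ℝ), (T.op f c).1 x = f (fun i => (c i).1 x)) :
    (∀ (f : (Fin m → ℝ) → (Fin k → ℝ)) (hf : ContDiff ℝ (⊤ : ℕ∞) f),
      IsCMor S T (fun c => ⟨fun x => c.1 (f x), c.2.comp hf⟩)) ∧
    ∀ φ : SmoothFn k → SmoothFn m, IsCMor S T φ →
      ∃! f : (Fin m → ℝ) → (Fin k → ℝ),
        ContDiff ℝ (⊤ : ℕ∞) f ∧ ∀ c : SmoothFn k, (φ c).1 = fun x => c.1 (f x) :=
  ⟨isCMor_pullback hS hT, fun φ hφ =>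
    ⟨coordMap φ, ⟨contDiff_coordMap φ, apply_eq_comp_coordMap_of_isCMor hS hT hφ⟩,
      fun _ hf => eq_coordMap_of_apply_eq_comp hf.2⟩⟩
end

section
/- Every Weil algebra admits at most one C^∞-ring structure compatible with its underlying commutative ℝ-algebra structure; in particular the C^∞-operations Φ_f are determined by the Taylor expansion of f: if W is a finite-dimensional local ℝ-algebra with maximal ideal 𝔪 satisfying 𝔪^n = 0 and W/𝔪 ≅ ℝ, then for any C^∞-ring structure on W extending the algebra structure, Φ_f(c_1,...,c_k) equals the Taylor polynomial of f of order n−1 around the residues (c̄_1,...,c̄_k) ∈ ℝ^k evaluated on the nilpotent parts of c_1,...,c_k. -/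
/-!
Taylor's formula with integral remainder writes a smooth `f` as its Taylor polynomial of order
`n - 1` at the residues `lam` plus `∑ ι, (∏ t, (x (ι t) - lam (ι t))) * g ι x` over multi-indices
`ι` of length `n`, where the `g ι` are smooth by differentiation under the integral sign. The
compatibility axioms make `S.op · c` additive, multiplicative and `ℝ`-linear on smooth functions,
and send `x i - lam i` to the nilpotent part `m i` of `c i`. The remainder is therefore sent into
`𝔪 ^ n = 0`, and `S.op f c` is the Taylor polynomial evaluated at `m`, an expression that does not
involve `S`.
-/

open Set Finset MeasureTheory
open scoped Nat ContDiff

universe u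

-- `P` and `E` share a universe because the induction step replaces `E` by `P →L[ℝ] E`.
theorem contDiff_parametric_intervalIntegral_of_contDiff {P E : Type u}
    [NormedAddCommGroup P] [NormedSpace ℝ P] [ProperSpace P] [NormedAddCommGroup E]
    [NormedSpace ℝ E] {F : P × ℝ → E} {N : ℕ} (hF : ContDiff ℝ N F) (a b : ℝ) :
    ContDiff ℝ N (fun x => ∫ t in a..b, F (x, t)) := by
  induction N generalizing E with
  | zero =>
    rw [Nat.cast_zero, contDiff_zero] at hF ⊢
    exact intervalIntegral.continuous_parametric_intervalIntegral_of_continuous'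
      (f := fun x t => F (x, t)) hF a b
  | succ N ih =>
    set G : P × ℝ → P →L[ℝ] E := fun p => (fderiv ℝ F p).comp (.inl ℝ P ℝ)
    have hG : ContDiff ℝ N G :=
      (hF.fderiv_right (by norm_cast)).clm_comp contDiff_const
    have hFG (t : ℝ) (x : P) : HasFDerivAt (fun x => F (x, t)) (G (x, t)) x :=
      ((hF.differentiable (by simp)) (x, t)).hasFDerivAt.comp x (hasFDerivAt_prodMk_left x t)
    have hderiv (x₀ : P) : HasFDerivAt (fun x => ∫ t in a..b, F (x, t))
        (∫ t in a..b, G (x₀, t)) x₀ := by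
      obtain ⟨C, hC⟩ := ((isCompact_closedBall x₀ 1).prod isCompact_uIcc)
        |>.exists_bound_of_continuousOn hG.continuous.continuousOn
      exact intervalIntegral.hasFDerivAt_integral_of_dominated_of_fderiv_le
        (bound := fun _ => C) (Metric.ball_mem_nhds x₀ one_pos)
        (.of_forall fun x => (hF.continuous.comp (.prodMk_right x)).aestronglyMeasurable)
        ((hF.continuous.comp (.prodMk_right x₀)).intervalIntegrable a b)
        (hG.continuous.comp (.prodMk_right x₀)).aestronglyMeasurable
        (.of_forall fun t ht x hx =>
          hC (x, t) ⟨Metric.ball_subset_closedBall hx, uIoc_subset_uIcc ht⟩)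
        intervalIntegrable_const (.of_forall fun t _ x _ => hFG t x)
    rw [Nat.cast_succ, contDiff_succ_iff_fderiv]
    refine ⟨fun x => (hderiv x).differentiableAt, by simp, ?_⟩
    rw [funext fun x => (hderiv x).fderiv]
    exact ih hG

theorem contDiff_infty_parametric_intervalIntegral_of_contDiff {P E : Type u}
    [NormedAddCommGroup P] [NormedSpace ℝ P] [ProperSpace P] [NormedAddCommGroup E]
    [NormedSpace ℝ E] {F : P × ℝ → E} (hF : ContDiff ℝ ∞ F) (a b : ℝ) :
    ContDiff ℝ ∞ (fun x => ∫ t in a..b, F (x, t)) :=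
  contDiff_infty.mpr fun _ =>
    contDiff_parametric_intervalIntegral_of_contDiff (hF.of_le (by exact_mod_cast le_top)) a b

theorem MultilinearMap.map_const_eq_sum_single {R ι κ M : Type*} [CommSemiring R] [Fintype ι]
    [DecidableEq ι] [Fintype κ] [DecidableEq κ] [AddCommMonoid M] [Module R M]
    (L : MultilinearMap R (fun _ : κ => ι → R) M) (y : ι → R) :
    L (fun _ => y) = ∑ r : κ → ι, (∏ t, y (r t)) • L (fun t => Pi.single (r t) 1) := by
  conv_lhs => rw [pi_eq_sum_univ' y]
  rw [L.map_sum]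
  exact Finset.sum_congr rfl fun r _ => L.map_smul_univ _ _

theorem exists_taylor_expansion_with_contDiff_remainder {k : ℕ} {f : (Fin k → ℝ) → ℝ}
    (hf : ContDiff ℝ ∞ f) (a : Fin k → ℝ) (N : ℕ) :
    ∃ g : (Fin N → Fin k) → (Fin k → ℝ) → ℝ, (∀ ι, ContDiff ℝ ∞ (g ι)) ∧ ∀ x,
      f x = ∑ j ∈ range N, (j ! : ℝ)⁻¹ * ∑ ι : Fin j → Fin k,
          iteratedFDeriv ℝ j f a (fun t => Pi.single (ι t) 1) * ∏ t, (x (ι t) - a (ι t)) +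
        ∑ ι : Fin N → Fin k, (∏ t, (x (ι t) - a (ι t))) * g ι x := by
  have hexpand (j : ℕ) (p y : Fin k → ℝ) : iteratedFDeriv ℝ j f p (fun _ => y) =
      ∑ ι : Fin j → Fin k, iteratedFDeriv ℝ j f p (fun t => Pi.single (ι t) 1) * ∏ t, y (ι t) :=
    ((iteratedFDeriv ℝ j f p).toMultilinearMap.map_const_eq_sum_single y).trans
      (sum_congr rfl fun _ _ => mul_comm _ _)
  cases N with
  | zero => exact ⟨fun _ => f, fun _ => hf, fun x => by simp⟩
  | succ n =>
    set D : (Fin (n + 1) → Fin k) → (Fin k → ℝ) → ℝ → ℝ := fun ι x t =>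
      (1 - t) ^ n * iteratedFDeriv ℝ (n + 1) f (a + t • (x - a)) (fun s => Pi.single (ι s) 1)
    have hD (ι : Fin (n + 1) → Fin k) :
        ContDiff ℝ ∞ fun p : (Fin k → ℝ) × ℝ => D ι p.1 p.2 := by
      have hDf : ContDiff ℝ ∞ fun p =>
          iteratedFDeriv ℝ (n + 1) f p (fun s => Pi.single (ι s) 1) :=
        (ContinuousMultilinearMap.apply ℝ (fun _ : Fin (n + 1) => Fin k → ℝ) ℝ
          (fun s => Pi.single (ι s) 1)).contDiff.comp
          (hf.iteratedFDeriv_right (m := ∞) (i := n + 1) (by exact_mod_cast le_top))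
      exact ((contDiff_const.sub contDiff_snd).pow n).mul
        (hDf.comp (contDiff_const.add (contDiff_snd.smul (contDiff_fst.sub contDiff_const))))
    refine ⟨fun ι x => (n ! : ℝ)⁻¹ * ∫ t in (0 : ℝ)..1, D ι x t,
      fun ι => contDiff_const.mul
        (contDiff_infty_parametric_intervalIntegral_of_contDiff (hD ι) 0 1),
      fun x => ?_⟩
    have h := map_add_eq_sum_add_integral_iteratedFDeriv (x := a) (y := x - a) (n := n)
      (fun t _ => hf.contDiffAt.of_le (by exact_mod_cast le_top))
    simp only [add_sub_cancel, hexpand, smul_eq_mul] at h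
    rw [h]
    congr 1
    have hD_sum (t : ℝ) : (1 - t) ^ n * ∑ ι : Fin (n + 1) → Fin k,
        iteratedFDeriv ℝ (n + 1) f (a + t • (x - a)) (fun s => Pi.single (ι s) 1) *
          ∏ s, (x - a) (ι s) = ∑ ι, (∏ s, (x (ι s) - a (ι s))) * D ι x t := by
      rw [mul_sum]
      exact sum_congr rfl fun ι _ => by simp only [D, Pi.sub_apply]; ring
    have hint (ι : Fin (n + 1) → Fin k) : IntervalIntegrable (D ι x) volume 0 1 :=
      ((hD ι).continuous.comp (Continuous.prodMk_right x)).intervalIntegrable 0 1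
    simp only [hD_sum]
    rw [intervalIntegral.integral_finsetSum fun ι _ => (hint ι).const_mul _, mul_sum]
    exact sum_congr rfl fun ι _ => by rw [intervalIntegral.integral_const_mul]; ring

namespace CInftyCompatible

variable {W : Type} [CommRing W] [Algebra ℝ W] {S : CInftyRingStruct W} {k : ℕ}

theorem op_add (hS : CInftyCompatible S) {f g : (Fin k → ℝ) → ℝ} (hf : ContDiff ℝ ∞ f)
    (hg : ContDiff ℝ ∞ g) (c : Fin k → W) :
    S.op (fun x => f x + g x) c = S.op f c + S.op g c := by
  have h := S.op_comp (fun y => y 0 + y 1) ![f, g] (by fun_prop)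
    (fun i => by fin_cases i <;> assumption) c
  simp only [Matrix.cons_val_zero, Matrix.cons_val_one] at h
  rw [h, hS.1]
  rfl

theorem op_mul (hS : CInftyCompatible S) {f g : (Fin k → ℝ) → ℝ} (hf : ContDiff ℝ ∞ f)
    (hg : ContDiff ℝ ∞ g) (c : Fin k → W) :
    S.op (fun x => f x * g x) c = S.op f c * S.op g c := by
  have h := S.op_comp (fun y => y 0 * y 1) ![f, g] (by fun_prop)
    (fun i => by fin_cases i <;> assumption) c
  simp only [Matrix.cons_val_zero, Matrix.cons_val_one] at h
  rw [h, hS.2.1]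
  rfl

theorem op_const_mul (hS : CInftyCompatible S) (r : ℝ) {g : (Fin k → ℝ) → ℝ}
    (hg : ContDiff ℝ ∞ g) (c : Fin k → W) :
    S.op (fun x => r * g x) c = r • S.op g c :=
  (S.op_comp (fun y => r * y 0) (fun _ => g) (by fun_prop) (fun _ => hg) c).trans
    (hS.2.2.1 r _)

theorem op_one (hS : CInftyCompatible S) (c : Fin k → W) : S.op (fun _ => 1) c = 1 :=
  (S.op_comp (fun _ => 1) Fin.elim0 contDiff_const (fun i => i.elim0) c).trans (hS.2.2.2.1 _)

theorem op_const (hS : CInftyCompatible S) (r : ℝ) (c : Fin k → W) :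
    S.op (fun _ => r) c = algebraMap ℝ W r := by
  simpa [Algebra.algebraMap_eq_smul_one, hS.op_one] using
    hS.op_const_mul r (g := fun _ => 1) contDiff_const c

theorem op_sum (hS : CInftyCompatible S) {ι : Type*} (s : Finset ι) {f : ι → (Fin k → ℝ) → ℝ}
    (hf : ∀ i ∈ s, ContDiff ℝ ∞ (f i)) (c : Fin k → W) :
    S.op (fun x => ∑ i ∈ s, f i x) c = ∑ i ∈ s, S.op (f i) c := by
  classical
  induction s using Finset.induction_on with
  | empty => simpa using hS.op_const 0 c
  | insert j s hj ih =>
    simp only [sum_insert hj]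
    have hf_s (i : ι) (hi : i ∈ s) : ContDiff ℝ ∞ (f i) := hf i (mem_insert_of_mem hi)
    rw [hS.op_add (hf j (mem_insert_self j s)) (ContDiff.sum hf_s), ih hf_s]

theorem op_prod (hS : CInftyCompatible S) {ι : Type*} (s : Finset ι) {f : ι → (Fin k → ℝ) → ℝ}
    (hf : ∀ i ∈ s, ContDiff ℝ ∞ (f i)) (c : Fin k → W) :
    S.op (fun x => ∏ i ∈ s, f i x) c = ∏ i ∈ s, S.op (f i) c := by
  classical
  induction s using Finset.induction_on with
  | empty => simpa using hS.op_one c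
  | insert j s hj ih =>
    simp only [prod_insert hj]
    have hf_s (i : ι) (hi : i ∈ s) : ContDiff ℝ ∞ (f i) := hf i (mem_insert_of_mem hi)
    rw [hS.op_mul (hf j (mem_insert_self j s)) (contDiff_prod hf_s), ih hf_s]

theorem op_sub_const (hS : CInftyCompatible S) (i : Fin k) (r : ℝ) (c : Fin k → W) :
    S.op (fun x => x i - r) c = c i - algebraMap ℝ W r := by
  simpa [sub_eq_add_neg, S.op_proj, hS.op_const] using
    hS.op_add (contDiff_apply ℝ ℝ i) contDiff_const (g := fun _ => -r) c

theorem op_eq_taylor (hS : CInftyCompatible S) {𝔪 : Ideal W} {n : ℕ} (hnil : 𝔪 ^ n = ⊥)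
    {f : (Fin k → ℝ) → ℝ} (hf : ContDiff ℝ ∞ f) (c : Fin k → W) (lam : Fin k → ℝ)
    (m : Fin k → W) (hc : ∀ i, c i = algebraMap ℝ W (lam i) + m i) (hm : ∀ i, m i ∈ 𝔪) :
    S.op f c = ∑ j ∈ range n, (j ! : ℝ)⁻¹ • ∑ ι : Fin j → Fin k,
      iteratedFDeriv ℝ j f lam (fun t => Pi.single (ι t) 1) • ∏ t, m (ι t) := by
  obtain ⟨g, hg, hfg⟩ := exists_taylor_expansion_with_contDiff_remainder hf lam n
  have hmono {j : ℕ} (ι : Fin j → Fin k) :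
      S.op (fun x => ∏ t, (x (ι t) - lam (ι t))) c = ∏ t, m (ι t) := by
    rw [hS.op_prod _ (fun _ _ => by fun_prop)]
    simp only [hS.op_sub_const, hc, add_sub_cancel_left]
  have hremainder :
      S.op (fun x => ∑ ι : Fin n → Fin k, (∏ t, (x (ι t) - lam (ι t))) * g ι x) c = 0 := by
    rw [hS.op_sum _ (fun ι _ => by fun_prop)]
    refine sum_eq_zero fun ι _ => ?_
    have hprod : ∏ t, m (ι t) ∈ 𝔪 ^ n := by
      simpa using Ideal.prod_mem_prod (s := univ) (I := fun _ => 𝔪) fun t _ => hm (ι t)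
    rw [hnil, Ideal.mem_bot] at hprod
    rw [hS.op_mul (by fun_prop) (hg ι), hmono, hprod, zero_mul]
  conv_lhs => rw [funext hfg]
  rw [hS.op_add (by fun_prop) (by fun_prop), hremainder, add_zero,
    hS.op_sum _ (fun _ _ => by fun_prop)]
  refine sum_congr rfl fun j _ => ?_
  rw [hS.op_const_mul _ (by fun_prop), hS.op_sum _ (fun _ _ => by fun_prop)]
  congr 1
  refine sum_congr rfl fun ι _ => ?_
  rw [hS.op_const_mul _ (by fun_prop), hmono]

end CInftyCompatible

theorem weil_algebra_unique_CInfty_structure_general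
    (W : Type) [CommRing W] [Algebra ℝ W]
    (n : ℕ) (𝔪 : Ideal W) (hnil : 𝔪 ^ n = ⊥)
    (hres : ∀ w : W, ∃ r : ℝ, w - algebraMap ℝ W r ∈ 𝔪)
    (S : CInftyRingStruct W) (hS : CInftyCompatible S) :
    (∀ T : CInftyRingStruct W, CInftyCompatible T →
      ∀ (k : ℕ) (f : (Fin k → ℝ) → ℝ), ContDiff ℝ (⊤ : ℕ∞) f →
        ∀ c : Fin k → W, S.op f c = T.op f c) ∧
    ∀ (k : ℕ) (f : (Fin k → ℝ) → ℝ), ContDiff ℝ (⊤ : ℕ∞) f →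
      ∀ (c : Fin k → W) (lam : Fin k → ℝ) (m : Fin k → W),
        (∀ i, c i = algebraMap ℝ W (lam i) + m i) → (∀ i, m i ∈ 𝔪) →
        S.op f c = ∑ j ∈ Finset.range n, (j.factorial : ℝ)⁻¹ •
          ∑ ι : Fin j → Fin k,
            (iteratedFDeriv ℝ j f lam (fun t => Pi.single (ι t) 1)) •
              ∏ t : Fin j, m (ι t) := by
  refine ⟨fun T hT k f hf c => ?_,
    fun k f hf c lam m hc hm => hS.op_eq_taylor hnil hf c lam m hc hm⟩
  choose lam hlam using fun i => hres (c i)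
  have hc (i : Fin k) : c i = algebraMap ℝ W (lam i) + (c i - algebraMap ℝ W (lam i)) :=
    (add_sub_cancel _ _).symm
  rw [hS.op_eq_taylor hnil hf c lam _ hc hlam, hT.op_eq_taylor hnil hf c lam _ hc hlam]

/-- A Weil algebra `W` (finite-dimensional local commutative `ℝ`-algebra
with maximal ideal `𝔪`, `𝔪^n = 0`, residue field `ℝ`) admits at most one `C^∞`-ring
structure compatible with its `ℝ`-algebra structure, and the operations are given by the
order-`(n-1)` Taylor polynomial of `f` around the residues, evaluated on the nilpotent
parts. -/
theorem weil_algebra_unique_CInfty_structure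
    (W : Type) [CommRing W] [Algebra ℝ W] (hfd : FiniteDimensional ℝ W)
    (n : ℕ) (hn : 0 < n) (𝔪 : Ideal W) (hmax : 𝔪.IsMaximal) (hnil : 𝔪 ^ n = ⊥)
    (hres : ∀ w : W, ∃ r : ℝ, w - algebraMap ℝ W r ∈ 𝔪)
    (S : CInftyRingStruct W) (hS : CInftyCompatible S) :
    (∀ T : CInftyRingStruct W, CInftyCompatible T →
      ∀ (k : ℕ) (f : (Fin k → ℝ) → ℝ), ContDiff ℝ (⊤ : ℕ∞) f →
        ∀ c : Fin k → W, S.op f c = T.op f c) ∧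
    ∀ (k : ℕ) (f : (Fin k → ℝ) → ℝ), ContDiff ℝ (⊤ : ℕ∞) f →
      ∀ (c : Fin k → W) (lam : Fin k → ℝ) (m : Fin k → W),
        (∀ i, c i = algebraMap ℝ W (lam i) + m i) → (∀ i, m i ∈ 𝔪) →
        S.op f c = ∑ j ∈ Finset.range n, (j.factorial : ℝ)⁻¹ •
          ∑ ι : Fin j → Fin k,
            (iteratedFDeriv ℝ j f lam (fun t => Pi.single (ι t) 1)) •
              ∏ t : Fin j, m (ι t) :=
  weil_algebra_unique_CInfty_structure_general W n 𝔪 hnil hres S hS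
end

section
/- Let I be an ideal of C^∞(ℝ^n) containing the ideal 𝔪_X^∞ of functions all of whose derivatives vanish on a closed set X ⊆ ℝ^n, in the sense that I = (f_1,...,f_k, 𝔪_X^∞) is generated by finitely many functions together with 𝔪_X^∞ (a 'good' ideal). Then I is fair (germ-determined): a function f ∈ C^∞(ℝ^n) lies in I if and only if for every p ∈ ℝ^n the germ π_p(f) lies in the ideal π_p(I) of the ring of germs C^∞_p(ℝ^n). (Consequently, good C^∞-rings are fair.) -/
set_option synthInstance.maxHeartbeats 1000000
set_option maxHeartbeats 1000000

/-- The ideal `𝔪_X^∞` of smooth functions all of whose derivatives vanish on the closed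
set `X ⊆ ℝ^n`, as a set of elements of `C^∞(ℝ^n)`. -/
def flatOn (n : ℕ) (X : Set (Fin n → ℝ)) : Set (SmoothAlg n) :=
  {g : SmoothAlg n | ∀ x ∈ X, ∀ j : ℕ, iteratedFDeriv ℝ j (g : (Fin n → ℝ) → ℝ) x = 0}

/-!
Membership in `I` is a local property because `I` is closed under gluing with smooth partitions
of unity: if `h` agrees near every `p` with some `g_p ∈ I` and `(φ_p)` is subordinate to these
neighbourhoods, then `h = ∑ φ_p g_p`. Writing `g_p = ∑_q a_{p,q} f_q + m_p` with `m_p` flat on `X`,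
this is `∑_q (∑_p φ_p a_{p,q}) f_q + ∑_p φ_p m_p`, and the last sum is again flat on `X`: near
any point it is a finite sum, and by the Leibniz rule a smooth multiple of a flat function is flat.
-/

open Set
open scoped Topology ContDiff Manifold

section Flat

variable {E : Type*} [NormedAddCommGroup E] [NormedSpace ℝ E]

def IsFlatAt (g : E → ℝ) (x : E) : Prop :=
  ∀ j : ℕ, iteratedFDeriv ℝ j g x = 0

theorem IsFlatAt.congr_of_eventuallyEq {f g : E → ℝ} {x : E} (hg : IsFlatAt g x)
    (hfg : f =ᶠ[𝓝 x] g) : IsFlatAt f x := fun j => by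
  rw [(hfg.iteratedFDeriv ℝ j).eq_of_nhds, hg j]

theorem IsFlatAt.add {f g : E → ℝ} {x : E} (hf : ContDiff ℝ ∞ f) (hg : ContDiff ℝ ∞ g)
    (hfx : IsFlatAt f x) (hgx : IsFlatAt g x) : IsFlatAt (f + g) x := fun j => by
  rw [iteratedFDeriv_add_apply (hf.of_le (by exact_mod_cast le_top)).contDiffAt
    (hg.of_le (by exact_mod_cast le_top)).contDiffAt, hfx j, hgx j, add_zero]

theorem IsFlatAt.sum {ι : Type*} {s : Finset ι} {g : ι → E → ℝ} {x : E}
    (hs : ∀ i ∈ s, ContDiff ℝ ∞ (g i)) (hg : ∀ i ∈ s, IsFlatAt (g i) x) :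
    IsFlatAt (∑ i ∈ s, g i) x := fun j => by
  rw [iteratedFDeriv_sum_apply fun i hi => ((hs i hi).of_le (by exact_mod_cast le_top)).contDiffAt]
  exact Finset.sum_eq_zero fun i hi => hg i hi j

theorem IsFlatAt.mul_left {φ g : E → ℝ} {x : E} (hφ : ContDiff ℝ ∞ φ) (hg : ContDiff ℝ ∞ g)
    (hgx : IsFlatAt g x) : IsFlatAt (fun y => φ y * g y) x := fun j => by
  rw [← norm_le_zero_iff]
  refine (norm_iteratedFDeriv_mul_le hφ hg x (by exact_mod_cast le_top)).trans_eq ?_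
  exact Finset.sum_eq_zero fun i _ => by simp [hgx (j - i)]

end Flat

def flatIdeal (n : ℕ) (X : Set (Fin n → ℝ)) : Ideal (SmoothAlg n) where
  carrier := flatOn n X
  zero_mem' := fun x _ j => by simp
  add_mem' := fun {a b} ha hb x hx => IsFlatAt.add a.2 b.2 (ha x hx) (hb x hx)
  smul_mem' := fun c a ha x hx => IsFlatAt.mul_left c.2 a.2 (ha x hx)

variable {n : ℕ}

theorem span_flatOn (X : Set (Fin n → ℝ)) : Ideal.span (flatOn n X) = flatIdeal n X :=
  Ideal.span_eq (flatIdeal n X)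

namespace SmoothPartitionOfUnity

variable {ι : Type*} (φ : SmoothPartitionOfUnity ι 𝓘(ℝ, Fin n → ℝ) (Fin n → ℝ) univ)

noncomputable def glue : (ι → SmoothAlg n) →ₗ[SmoothAlg n] SmoothAlg n where
  toFun g := ⟨fun x => ∑ᶠ i, φ i x • (g i : (Fin n → ℝ) → ℝ) x,
    (φ.contMDiff_finsum_smul fun i x _ => (smooth_mem (g i).2).contMDiff.contMDiffAt).contDiff⟩
  map_add' g g' := by
    ext x
    simp only [← φ.sum_finsupport_smul_eq_finsum]
    simp [Finset.sum_add_distrib, mul_add]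
  map_smul' c g := by
    ext x
    simp only [← φ.sum_finsupport_smul_eq_finsum]
    simp [Finset.mul_sum, mul_left_comm]

theorem glue_apply (g : ι → SmoothAlg n) (x : Fin n → ℝ) :
    (φ.glue g : (Fin n → ℝ) → ℝ) x = ∑ᶠ i, φ i x * (g i : (Fin n → ℝ) → ℝ) x :=
  rfl

theorem glue_eq_of_eqOn {U : ι → Set (Fin n → ℝ)} (hφ : φ.IsSubordinate U) {g : ι → SmoothAlg n}
    {h : SmoothAlg n} (hgh : ∀ i, EqOn (h : (Fin n → ℝ) → ℝ) (g i) (U i)) : φ.glue g = h := by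
  ext x
  refine φ.finsum_smul_mem_convex (t := {(h : (Fin n → ℝ) → ℝ) x}) (mem_univ x) (fun i hi => ?_)
    (convex_singleton _)
  exact (hgh i (hφ i (subset_closure hi))).symm

theorem glue_mem_flatIdeal {X : Set (Fin n → ℝ)} {g : ι → SmoothAlg n}
    (hg : ∀ i, g i ∈ flatIdeal n X) : φ.glue g ∈ flatIdeal n X := by
  intro x hx
  obtain ⟨s, hs⟩ := φ.locallyFinite.exists_finset_support x
  have hglue : (φ.glue g : (Fin n → ℝ) → ℝ) =ᶠ[𝓝 x]
      ∑ i ∈ s, fun y => φ i y * (g i : (Fin n → ℝ) → ℝ) y := by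
    filter_upwards [hs] with y hy
    rw [glue_apply, Finset.sum_apply]
    exact finsum_eq_sum_of_support_subset _ ((Function.support_mul_subset_left _ _).trans hy)
  refine IsFlatAt.congr_of_eventuallyEq ?_ hglue
  exact .sum (fun i _ => (φ i).contMDiff.contDiff.mul (g i).2)
    fun i _ => .mul_left (φ i).contMDiff.contDiff (g i).2 (hg i x hx)

end SmoothPartitionOfUnity

def IsClosedUnderGluing (I : Ideal (SmoothAlg n)) : Prop :=
  ∀ ⦃ι : Type⦄ (φ : SmoothPartitionOfUnity ι 𝓘(ℝ, Fin n → ℝ) (Fin n → ℝ) univ)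
    (g : ι → SmoothAlg n), (∀ i, g i ∈ I) → φ.glue g ∈ I

theorem isClosedUnderGluing_flatIdeal (X : Set (Fin n → ℝ)) :
    IsClosedUnderGluing (flatIdeal n X) :=
  fun _ φ _ => φ.glue_mem_flatIdeal

theorem isClosedUnderGluing_span_range {κ : Type*} [Fintype κ] (f : κ → SmoothAlg n) :
    IsClosedUnderGluing (Ideal.span (range f)) := by
  intro ι φ g hg
  choose c hc using fun i => Ideal.mem_span_range_iff_exists_fun.mp (hg i)
  have hg_eq : g = ∑ q, f q • fun i => c i q := by
    ext1 i
    simp [← hc i, mul_comm]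
  rw [hg_eq, map_sum]
  exact Ideal.sum_mem _ fun q _ => by
    rw [map_smul, smul_eq_mul]
    exact Ideal.mul_mem_right _ _ (Ideal.subset_span (mem_range_self q))

theorem IsClosedUnderGluing.sup {I J : Ideal (SmoothAlg n)} (hI : IsClosedUnderGluing I)
    (hJ : IsClosedUnderGluing J) : IsClosedUnderGluing (I ⊔ J) := by
  intro ι φ g hg
  choose y hy z hz hyz using fun i => Submodule.mem_sup.mp (hg i)
  have hg_eq : g = y + z := funext fun i => (hyz i).symm
  rw [hg_eq, map_add]
  exact Ideal.add_mem _ (Ideal.mem_sup_left (hI φ y hy)) (Ideal.mem_sup_right (hJ φ z hz))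

theorem IsClosedUnderGluing.mem_of_forall_eventuallyEq {I : Ideal (SmoothAlg n)}
    (hI : IsClosedUnderGluing I) {h : SmoothAlg n}
    (hloc : ∀ p, ∃ g ∈ I, (h : (Fin n → ℝ) → ℝ) =ᶠ[𝓝 p] g) : h ∈ I := by
  choose g hgI hgh using hloc
  choose U hhU hUo hpU using fun p => eventually_nhds_iff.mp (hgh p)
  obtain ⟨φ, hφ⟩ := SmoothPartitionOfUnity.exists_isSubordinate 𝓘(ℝ, Fin n → ℝ) isClosed_univ U
    hUo fun p _ => mem_iUnion.mpr ⟨p, hpU p⟩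
  rw [← φ.glue_eq_of_eqOn hφ hhU]
  exact hI φ g hgI

theorem good_ideals_are_fair_general (n k : ℕ) (X : Set (Fin n → ℝ))
    (f : Fin k → SmoothAlg n) (I : Ideal (SmoothAlg n))
    (hI : I = Ideal.span (Set.range f ∪ flatOn n X)) :
    ∀ h : SmoothAlg n, h ∈ I ↔
      ∀ p : Fin n → ℝ, ∃ g ∈ I,
        (h : (Fin n → ℝ) → ℝ) =ᶠ[nhds p] (g : (Fin n → ℝ) → ℝ) := by
  have hglue : IsClosedUnderGluing I := by
    rw [hI, Ideal.span_union, span_flatOn]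
    exact (isClosedUnderGluing_span_range f).sup (isClosedUnderGluing_flatIdeal X)
  exact fun h => ⟨fun hh _ => ⟨h, hh, .rfl⟩, hglue.mem_of_forall_eventuallyEq⟩

/-- Every good ideal `I = (f_1,…,f_k, 𝔪_X^∞)` of `C^∞(ℝ^n)` (with
`X ⊆ ℝ^n` closed) is fair (germ-determined): `h ∈ I` iff for every `p ∈ ℝ^n` the germ of
`h` at `p` lies in the image of `I` in the ring of germs `C^∞_p(ℝ^n)`, i.e. iff for every
`p` there is `g ∈ I` with `h = g` near `p`. -/
theorem good_ideals_are_fair (n k : ℕ) (X : Set (Fin n → ℝ)) (hX : IsClosed X)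
    (f : Fin k → SmoothAlg n) (I : Ideal (SmoothAlg n))
    (hI : I = Ideal.span (Set.range f ∪ flatOn n X)) :
    ∀ h : SmoothAlg n, h ∈ I ↔
      ∀ p : Fin n → ℝ, ∃ g ∈ I,
        (h : (Fin n → ℝ) → ℝ) =ᶠ[nhds p] (g : (Fin n → ℝ) → ℝ) :=
  good_ideals_are_fair_general n k X f I hI
end
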